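/- Let a, b, ω > 0, −a²b < σ < 0, μ ∈ (0, 1), and ε ∈ (0, 1), and set γ_μ = √(a² + (1−μ)σ/b). Let u = (u₁, u₂) : [0, ∞) → ℝ² be continuous with sup_{t≥0} ‖u(t)‖ < (1−ε)·μ·|σ|·√(a − γ_μ), and let φ = (x, y) : [0, ∞) → ℝ² be a solution of the forced bistable oscillator ẋ = −ωy + x·g(x²+y²) + u₁(t), ẏ = ωx + y·g(x²+y²) + u₂(t) with x(0)² + y(0)² < a − γ_μ. Then x(t)² + y(t)² < a − γ_μ for all t ≥ 0; i.e., the disk ℬ_μ = {(x,y) : x² + y² < a − γ_μ} is forward invariant for the forced system. -/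

import Mathlib

/-!
Let `V = x² + y²`. The rotation terms cancel in `V'`, leaving `V' = 2 V g(V) + 2 ⟨(x, y), u⟩`.
On the circle `V = ρ := a - γ_μ` one has `g(ρ) = σ + a²b - b γ_μ² ≤ μ σ`, and by Cauchy–Schwarz
the input term is at most `2 √ρ ‖u‖ < 2 (1 - ε) μ |σ| ρ`, so `V' < 2 ε μ σ ρ < 0` there.
A trajectory starting inside the disk can therefore never reach its boundary.
-/

theorem forall_lt_of_hasDerivAt_neg_of_eq {V V' : ℝ → ℝ} {ρ : ℝ}
    (hV : ∀ t ≥ (0 : ℝ), HasDerivAt V (V' t) t) (hρ : ∀ t ≥ (0 : ℝ), V t = ρ → V' t < 0)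
    (h0 : V 0 < ρ) : ∀ t ≥ (0 : ℝ), V t < ρ := by
  have hle : ∀ t ≥ (0 : ℝ), V t ≤ ρ := fun t ht =>
    image_le_of_deriv_right_lt_deriv_boundary (B := fun _ => ρ) (B' := 0)
      (fun s hs => (hV s hs.1).continuousAt.continuousWithinAt)
      (fun s hs => (hV s hs.1).hasDerivWithinAt) h0.le (fun _ => hasDerivAt_const _ _)
      (fun s hs hs' => hρ s hs.1 hs') ⟨ht, le_rfl⟩
  intro t ht
  refine (hle t ht).lt_of_ne fun heq => ?_
  have htpos : 0 < t := ht.lt_of_ne (by rintro rfl; exact h0.ne heq)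
  have hmax : IsLocalMax V t :=
    Filter.eventually_of_mem (Ioi_mem_nhds htpos) fun s hs => heq ▸ hle s (le_of_lt hs)
  exact (hρ t ht heq).ne (hmax.hasDerivAt_eq_zero (hV t ht))

theorem hasDerivAt_sq_add_sq_of_rotation {x y : ℝ → ℝ} {ω h v₁ v₂ t : ℝ}
    (hx : HasDerivAt x (-ω * y t + x t * h + v₁) t)
    (hy : HasDerivAt y (ω * x t + y t * h + v₂) t) :
    HasDerivAt (fun s => x s ^ 2 + y s ^ 2)
      (2 * (x t ^ 2 + y t ^ 2) * h + 2 * (x t * v₁ + y t * v₂)) t := by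
  refine ((hx.pow 2).add (hy.pow 2)).congr_deriv ?_
  push_cast
  ring

theorem mul_add_mul_le_sqrt_mul_sqrt (x y u v : ℝ) :
    x * u + y * v ≤ √(x ^ 2 + y ^ 2) * √(u ^ 2 + v ^ 2) := by
  rw [← Real.sqrt_mul (by positivity)]
  exact Real.le_sqrt_of_sq_le (by nlinarith [sq_nonneg (x * v - y * u)])

theorem bistable_rate_sub_sqrt_le {a b σ μ : ℝ} (hb : 0 < b) :
    σ + 2 * a * b * (a - √(a ^ 2 + (1 - μ) * σ / b))
      - b * (a - √(a ^ 2 + (1 - μ) * σ / b)) ^ 2 ≤ μ * σ := by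
  set γ := √(a ^ 2 + (1 - μ) * σ / b)
  have hγ : a ^ 2 + (1 - μ) * σ / b ≤ γ ^ 2 := Real.sq_sqrt' ▸ le_max_left _ _
  have hbγ : a ^ 2 * b + (1 - μ) * σ ≤ b * γ ^ 2 := by
    calc a ^ 2 * b + (1 - μ) * σ = b * (a ^ 2 + (1 - μ) * σ / b) := by field_simp
      _ ≤ b * γ ^ 2 := mul_le_mul_of_nonneg_left hγ hb.le
  linear_combination hbγ

theorem stmt_12_general (a b ω σ μ ε : ℝ) (hb : 0 < b) (hσ2 : σ < 0)
    (hμ : μ ∈ Set.Ioo (0 : ℝ) 1) (hε : ε ∈ Set.Ioo (0 : ℝ) 1)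
    (u1 u2 : ℝ → ℝ)
    (U : ℝ) (hU : ∀ t ≥ (0 : ℝ), Real.sqrt (u1 t ^ 2 + u2 t ^ 2) ≤ U)
    (hUb : U < (1 - ε) * μ * |σ| * Real.sqrt (a - Real.sqrt (a ^ 2 + (1 - μ) * σ / b)))
    (x y : ℝ → ℝ)
    (hx : ∀ t ≥ (0 : ℝ), HasDerivAt x
      (-ω * y t + x t * (σ + 2 * a * b * (x t ^ 2 + y t ^ 2) - b * (x t ^ 2 + y t ^ 2) ^ 2)
        + u1 t) t)
    (hy : ∀ t ≥ (0 : ℝ), HasDerivAt y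
      (ω * x t + y t * (σ + 2 * a * b * (x t ^ 2 + y t ^ 2) - b * (x t ^ 2 + y t ^ 2) ^ 2)
        + u2 t) t)
    (h0 : x 0 ^ 2 + y 0 ^ 2 < a - Real.sqrt (a ^ 2 + (1 - μ) * σ / b)) :
    ∀ t ≥ (0 : ℝ), x t ^ 2 + y t ^ 2 < a - Real.sqrt (a ^ 2 + (1 - μ) * σ / b) := by
  have hrate := bistable_rate_sub_sqrt_le (a := a) (σ := σ) (μ := μ) hb
  set ρ := a - √(a ^ 2 + (1 - μ) * σ / b)
  have hρ : 0 < ρ := (by positivity : 0 ≤ x 0 ^ 2 + y 0 ^ 2).trans_lt h0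
  refine forall_lt_of_hasDerivAt_neg_of_eq
    (fun t ht => hasDerivAt_sq_add_sq_of_rotation (hx t ht) (hy t ht)) ?_ h0
  intro t ht hVt
  have hinput : x t * u1 t + y t * u2 t ≤ √ρ * U := by
    refine (mul_add_mul_le_sqrt_mul_sqrt _ _ _ _).trans ?_
    rw [hVt]
    exact mul_le_mul_of_nonneg_left (hU t ht) (Real.sqrt_nonneg _)
  have hU' : √ρ * U < (1 - ε) * μ * -σ * ρ := by
    calc √ρ * U < √ρ * ((1 - ε) * μ * |σ| * √ρ) := mul_lt_mul_of_pos_left hUb (by positivity)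
      _ = (1 - ε) * μ * -σ * ρ := by
        rw [abs_of_neg hσ2]
        linear_combination (1 - ε) * μ * -σ * Real.sq_sqrt hρ.le
  rw [hVt]
  nlinarith [mul_le_mul_of_nonneg_left hrate (by positivity : 0 ≤ 2 * ρ),
    mul_pos (mul_pos hρ hμ.1) hε.1]

/-- the disk x²+y² < a - γ_μ is forward invariant for the forced system. -/
theorem stmt_12 (a b ω σ μ ε : ℝ) (ha : 0 < a) (hb : 0 < b) (hω : 0 < ω)
    (hσ1 : -a ^ 2 * b < σ) (hσ2 : σ < 0)
    (hμ : μ ∈ Set.Ioo (0 : ℝ) 1) (hε : ε ∈ Set.Ioo (0 : ℝ) 1)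
    (u1 u2 : ℝ → ℝ) (hu1 : Continuous u1) (hu2 : Continuous u2)
    (U : ℝ) (hU : ∀ t ≥ (0 : ℝ), Real.sqrt (u1 t ^ 2 + u2 t ^ 2) ≤ U)
    (hUb : U < (1 - ε) * μ * |σ| * Real.sqrt (a - Real.sqrt (a ^ 2 + (1 - μ) * σ / b)))
    (x y : ℝ → ℝ)
    (hx : ∀ t ≥ (0 : ℝ), HasDerivAt x
      (-ω * y t + x t * (σ + 2 * a * b * (x t ^ 2 + y t ^ 2) - b * (x t ^ 2 + y t ^ 2) ^ 2)
        + u1 t) t)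
    (hy : ∀ t ≥ (0 : ℝ), HasDerivAt y
      (ω * x t + y t * (σ + 2 * a * b * (x t ^ 2 + y t ^ 2) - b * (x t ^ 2 + y t ^ 2) ^ 2)
        + u2 t) t)
    (h0 : x 0 ^ 2 + y 0 ^ 2 < a - Real.sqrt (a ^ 2 + (1 - μ) * σ / b)) :
    ∀ t ≥ (0 : ℝ), x t ^ 2 + y t ^ 2 < a - Real.sqrt (a ^ 2 + (1 - μ) * σ / b) :=
  stmt_12_general a b ω σ μ ε hb hσ2 hμ hε u1 u2 U hU hUb x y hx hy h0
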